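/- arXiv:1906.09297 — 2 statements merged into one kernel-verified Lean document; each statement's English description precedes it below -/
import Mathlib

section
/- Let S ∈ ℝ^{N×N} be lower triangular with unit diagonal, representing a transitively closed DAG, and let 1_N be the all-ones column vector. Define L̃ := blkdiag(E_{n_i} L^i E_{p_i}ᵀ) where L^i ∈ ℝ^{n_i×p_i}, and L̄ := blkdiag(E_{n_{\bar i}} L^{\bar i} E_{p_{\bar i}}ᵀ) where L^{\bar i} := blkdiag({L^j}_{j∈\bar i}) and \bar i is the ancestor set of node i. Then (S ⊗ Iₙ) L̃ (1_N ⊗ I_p) = L̄ (1_N ⊗ I_p). -/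
open Matrix Kronecker

theorem stmt11 (N : ℕ) (n p : Fin N → ℕ)
    (S : Matrix (Fin N) (Fin N) ℝ)
    (h01 : ∀ i j, S i j = 0 ∨ S i j = 1)
    (hlt : ∀ i j : Fin N, i < j → S i j = 0)
    (hdiag : ∀ i, S i i = 1)
    (htrans : ∀ i j k, S i j = 1 → S j k = 1 → S i k = 1)
    (L : ∀ i : Fin N, Matrix (Fin (n i)) (Fin (p i)) ℝ)
    (Ltilde : Matrix (Fin N × Σ j, Fin (n j)) (Fin N × Σ j, Fin (p j)) ℝ)
    (hLtilde : ∀ (i : Fin N) (x : Σ j, Fin (n j)) (i' : Fin N) (y : Σ j, Fin (p j)),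
      Ltilde (i, x) (i', y) =
        if h : i = i' ∧ x.1 = i ∧ y.1 = i
        then L i (Fin.cast (congrArg n h.2.1) x.2) (Fin.cast (congrArg p h.2.2) y.2) else 0)
    (Lbar : Matrix (Fin N × Σ j, Fin (n j)) (Fin N × Σ j, Fin (p j)) ℝ)
    (hLbar : ∀ (i : Fin N) (x : Σ j, Fin (n j)) (i' : Fin N) (y : Σ j, Fin (p j)),
      Lbar (i, x) (i', y) =
        if h : i = i' ∧ x.1 = y.1 ∧ S i x.1 = 1
        then L x.1 x.2 (Fin.cast (congrArg p h.2.1.symm) y.2) else 0)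
    (onesp : Matrix (Fin N × Σ j, Fin (p j)) (Σ j, Fin (p j)) ℝ)
    (honesp : ∀ (i : Fin N) (x y : Σ j, Fin (p j)),
      onesp (i, x) y = if x = y then 1 else 0) :
    (S ⊗ₖ (1 : Matrix (Σ j, Fin (n j)) (Σ j, Fin (n j)) ℝ)) * Ltilde * onesp
      = Lbar * onesp := by
  ext ⟨i, x⟩ y
  obtain ⟨a, xa⟩ := x
  obtain ⟨b, yb⟩ := y
  simp only [Matrix.mul_apply, Fintype.sum_prod_type, honesp, hLtilde, hLbar,
    kroneckerMap_apply, Matrix.one_apply, mul_ite, mul_one, mul_zero, ite_mul, zero_mul,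
    Finset.sum_ite_eq, Finset.mem_univ, if_true, Finset.sum_ite_eq']
  rw [Finset.sum_comm,
      Finset.sum_eq_single_of_mem a (Finset.mem_univ a) ?h1,
      Finset.sum_eq_single_of_mem a (Finset.mem_univ a) ?h2,
      Finset.sum_eq_single_of_mem i (Finset.mem_univ i) ?h3]
  case h1 =>
    intro c _ hc
    apply Finset.sum_eq_zero
    intro d _
    rw [dif_neg (fun h => hc h.2.1.symm), mul_zero]
  case h2 =>
    intro d _ hd
    rw [dif_neg (fun h => hd h.1.symm), mul_zero]
  case h3 =>
    intro c _ hc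
    rw [dif_neg (fun h => hc h.1.symm)]
  by_cases hab : b = a
  · subst hab
    rw [dif_pos ⟨rfl, rfl, rfl⟩]
    rcases h01 i b with h0 | h1
    · rw [dif_neg (fun h => by rw [h0] at h; norm_num at h), h0, zero_mul]
    · rw [dif_pos ⟨rfl, rfl, h1⟩]
      simp only [h1, one_mul]
      rfl
  · rw [dif_neg (fun h => hab h.2.2), dif_neg (fun h => hab h.2.1.symm), mul_zero]
end

section
/- Let S be the adjacency matrix of a transitively closed DAG with self-loops (lower triangular, unit diagonal, in topological order), and let S⁻¹ be its inverse. Then S⁻¹ has support contained in the support of S: (S⁻¹)_{ij} ≠ 0 implies S_{ij} = 1, i.e., j is an ancestor of i. -/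
open Matrix

theorem stmt13 (N : ℕ) (S : Matrix (Fin N) (Fin N) ℝ)
    (h01 : ∀ i j, S i j = 0 ∨ S i j = 1)
    (hlt : ∀ i j : Fin N, i < j → S i j = 0)
    (hdiag : ∀ i, S i i = 1)
    (htrans : ∀ i j k, S i j = 1 → S j k = 1 → S i k = 1) :
    ∀ i j : Fin N, S⁻¹ i j ≠ 0 → S i j = 1 := by
  have hdet : S.det = 1 := by
    rw [Matrix.det_of_lowerTriangular S hlt]
    simp [hdiag]
  have hinv : S * S⁻¹ = 1 := Matrix.mul_nonsing_inv S (by rw [hdet]; exact isUnit_one)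
  have key : ∀ n : ℕ, ∀ i : Fin N, i.val = n → ∀ j, S i j = 0 → S⁻¹ i j = 0 := by
    intro n
    induction n using Nat.strong_induction_on with
    | _ n ih =>
      intro i hi j hSij
      have hij : i ≠ j := fun h => by rw [h, hdiag j] at hSij; norm_num at hSij
      have h1 : (S * S⁻¹) i j = 0 := by
        rw [hinv]; simp [Matrix.one_apply, hij]
      rw [Matrix.mul_apply] at h1
      have hsplit : ∀ k : Fin N, k ∈ Finset.univ → k ≠ i → S i k * S⁻¹ k j = 0 := by
        intro k _ hk
        rcases h01 i k with h0 | h1'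
        · rw [h0, zero_mul]
        · have hki : k < i := by
            rcases lt_trichotomy k i with h | h | h
            · exact h
            · exact absurd h hk
            · exact absurd (hlt i k h) (by rw [h1']; norm_num)
          have hSkj : S k j = 0 := by
            rcases h01 k j with h | h
            · exact h
            · exact absurd (htrans i k j h1' h) (by rw [hSij]; norm_num)
          rw [ih k.val (by omega) k rfl j hSkj, mul_zero]
      rw [Finset.sum_eq_single i hsplit (by simp), hdiag i, one_mul] at h1
      exact h1
  intro i j h
  rcases h01 i j with h0 | h1
  · exact absurd (key i.val i rfl j h0) h
  · exact h1
end
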